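/- One-step progress independent of the negative curvature: let f : E → ℝ be twice continuously differentiable with L-Lipschitz-continuous Hessian (L > 0). Fix x ∈ E, suppose ∇²f(x) = A₊ − A₋ with A₊, A₋ symmetric positive semidefinite, let H be symmetric positive semidefinite with ‖A₊ − H‖ ≤ β for some β ≥ 0, let P be an orthogonal projection with H∘P = H and ‖(H − ∇²f(x))∘P‖ ≤ η, where η ≥ β and η > 0, and let x⁺ satisfy ∇f(x) + (H + αI)(x⁺ − x) = 0 with α = (L/2)·‖x⁺ − x‖ + η. Define y⁺ := x + P(x⁺ − x). Then f(x) − f(x⁺) ≥ min{ ‖∇f(y⁺)‖^{3/2}/(6√(2L)), ‖∇f(y⁺)‖²/(32η) }. -/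

import Mathlib

/-!
Write `s = x⁺ - x`. The step equation says `∇f(x) = -(H + α I) s`, so the cubic Taylor bound,
together with `⟪∇²f(x) s, s⟫ ≤ ⟪A₊ s, s⟫ ≤ ⟪H s, s⟫ + β ‖s‖²`, gives
`f(x) - f(x⁺) ≥ L/3 ‖s‖³ + η/2 ‖s‖²`. Since `H = H P`, also `∇f(x) = -H (P s) - α s`, and the
quadratic Taylor bound for `∇f` between `x` and `y⁺ = x + P s` (with `‖P s‖ ≤ ‖s‖`) gives
`‖∇f(y⁺)‖ ≤ L ‖s‖² + 2 η ‖s‖`. Whichever of the two terms dominates yields one branch of the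
minimum.
-/
open scoped RealInnerProductSpace
open Real Set

def IsSymmPSD {n : ℕ} (H : EuclideanSpace ℝ (Fin n) →L[ℝ] EuclideanSpace ℝ (Fin n)) : Prop :=
  (∀ u v, ⟪H u, v⟫ = ⟪u, H v⟫) ∧ ∀ u, 0 ≤ ⟪H u, u⟫

noncomputable def hess {n : ℕ} (f : EuclideanSpace ℝ (Fin n) → ℝ)
    (x : EuclideanSpace ℝ (Fin n)) :
    EuclideanSpace ℝ (Fin n) →L[ℝ] EuclideanSpace ℝ (Fin n) :=
  fderiv ℝ (gradient f) x

section Taylor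

variable {E F : Type*} [NormedAddCommGroup E] [NormedSpace ℝ E] [NormedAddCommGroup F]
  [NormedSpace ℝ F]

theorem norm_le_div_of_norm_deriv_le_mul_pow {φ φ' : ℝ → F} (hφ : ∀ τ, HasDerivAt φ (φ' τ) τ)
    (h0 : φ 0 = 0) {C : ℝ} {k : ℕ} (hbound : ∀ τ ∈ Ico (0 : ℝ) 1, ‖φ' τ‖ ≤ C * τ ^ k) :
    ‖φ 1‖ ≤ C / (k + 1) := by
  have hB : ∀ τ : ℝ, HasDerivAt (fun τ => C / (k + 1) * τ ^ (k + 1)) (C * τ ^ k) τ := by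
    intro τ
    refine ((hasDerivAt_pow (k + 1) τ).const_mul (C / (k + 1))).congr_deriv ?_
    push_cast
    field_simp
  simpa using image_norm_le_of_norm_deriv_right_le_deriv_boundary
    (fun τ _ => (hφ τ).continuousAt.continuousWithinAt) (fun τ _ => (hφ τ).hasDerivWithinAt)
    (by simp [h0]) hB hbound (right_mem_Icc.2 zero_le_one)

theorem HasFDerivAt.hasDerivAt_comp_add_smul {g : E → F} {g' : E →L[ℝ] F} {x v : E} {τ : ℝ}
    (hg : HasFDerivAt g g' (x + τ • v)) :
    HasDerivAt (fun τ : ℝ => g (x + τ • v)) (g' v) τ := by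
  refine hg.comp_hasDerivAt τ ?_
  simpa using ((hasDerivAt_id τ).smul_const v).const_add x

theorem norm_sub_sub_apply_le_of_lipschitz_fderiv {g : E → F} {g' : E → E →L[ℝ] F} {L : ℝ}
    {x : E} (hg : ∀ y, HasFDerivAt g (g' y) y) (hLip : ∀ y, ‖g' y - g' x‖ ≤ L * ‖y - x‖)
    (v : E) : ‖g (x + v) - g x - g' x v‖ ≤ L / 2 * ‖v‖ ^ 2 := by
  have hφ : ∀ τ : ℝ, HasDerivAt (fun τ : ℝ => g (x + τ • v) - g x - τ • g' x v)
      ((g' (x + τ • v) - g' x) v) τ := fun τ => by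
    simpa using (((hg _).hasDerivAt_comp_add_smul).sub_const (g x)).fun_sub
      ((hasDerivAt_id' τ).smul_const (g' x v))
  have hbound : ∀ τ ∈ Ico (0 : ℝ) 1, ‖(g' (x + τ • v) - g' x) v‖ ≤ L * ‖v‖ ^ 2 * τ ^ 1 := by
    intro τ hτ
    calc ‖(g' (x + τ • v) - g' x) v‖ ≤ ‖g' (x + τ • v) - g' x‖ * ‖v‖ :=
          (g' (x + τ • v) - g' x).le_opNorm v
      _ ≤ L * ‖τ • v‖ * ‖v‖ := by
          gcongr; simpa using hLip (x + τ • v)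
      _ = L * ‖v‖ ^ 2 * τ ^ 1 := by rw [norm_smul, Real.norm_of_nonneg hτ.1]; ring
  have := norm_le_div_of_norm_deriv_le_mul_pow hφ (by simp) hbound
  norm_num at this
  linarith

end Taylor

section InnerProduct

variable {E : Type*} [NormedAddCommGroup E] [InnerProductSpace ℝ E]

theorem ContDiff.differentiable_gradient [CompleteSpace E] {f : E → ℝ} {n : WithTop ℕ∞}
    (hf : ContDiff ℝ n f) (hn : 2 ≤ n) : Differentiable ℝ (gradient f) :=
  (InnerProductSpace.toDual ℝ E).symm.toContinuousLinearEquiv.differentiable.comp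
    ((hf.fderiv_right (m := 1) hn).differentiable one_ne_zero)

theorem abs_sub_sub_inner_sub_inner_le_of_lipschitz_hessian [CompleteSpace E] {f : E → ℝ}
    {f' : E → E} {f'' : E → E →L[ℝ] E} {L : ℝ} {x : E} (hf : ∀ y, HasGradientAt f (f' y) y)
    (hf' : ∀ y, HasFDerivAt f' (f'' y) y) (hLip : ∀ y, ‖f'' y - f'' x‖ ≤ L * ‖y - x‖) (v : E) :
    |f (x + v) - f x - ⟪f' x, v⟫ - 1 / 2 * ⟪f'' x v, v⟫| ≤ L / 6 * ‖v‖ ^ 3 := by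
  have hφ : ∀ τ : ℝ, HasDerivAt
      (fun τ : ℝ => f (x + τ • v) - f x - τ * ⟪f' x, v⟫ - τ ^ 2 / 2 * ⟪f'' x v, v⟫)
      ⟪f' (x + τ • v) - f' x - f'' x (τ • v), v⟫ τ := fun τ => by
    have := ((((hf (x + τ • v)).hasFDerivAt.hasDerivAt_comp_add_smul).sub_const (f x)).fun_sub
      ((hasDerivAt_id' τ).mul_const ⟪f' x, v⟫)).fun_sub
      (((hasDerivAt_pow 2 τ).div_const 2).mul_const ⟪f'' x v, v⟫)
    refine this.congr_deriv ?_
    simp only [InnerProductSpace.toDual_apply_apply, inner_sub_left, map_smul, real_inner_smul_left]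
    ring
  have hbound : ∀ τ ∈ Ico (0 : ℝ) 1,
      ‖⟪f' (x + τ • v) - f' x - f'' x (τ • v), v⟫‖ ≤ L / 2 * ‖v‖ ^ 3 * τ ^ 2 := by
    intro τ hτ
    calc ‖⟪f' (x + τ • v) - f' x - f'' x (τ • v), v⟫‖
        ≤ ‖f' (x + τ • v) - f' x - f'' x (τ • v)‖ * ‖v‖ := norm_inner_le_norm _ _
      _ ≤ L / 2 * ‖τ • v‖ ^ 2 * ‖v‖ := by
          gcongr; exact norm_sub_sub_apply_le_of_lipschitz_fderiv hf' hLip _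
      _ = L / 2 * ‖v‖ ^ 3 * τ ^ 2 := by rw [norm_smul, Real.norm_of_nonneg hτ.1]; ring
  have := norm_le_div_of_norm_deriv_le_mul_pow hφ (by simp) hbound
  norm_num at this
  linarith

theorem norm_apply_le_of_symm_of_idempotent {P : E →L[ℝ] E} (hPsym : ∀ u v, ⟪P u, v⟫ = ⟪u, P v⟫)
    (hPidem : P.comp P = P) (u : E) : ‖P u‖ ≤ ‖u‖ := by
  have hsq : ‖P u‖ ^ 2 = ⟪u, P u⟫ := by
    rw [← real_inner_self_eq_norm_sq, hPsym, ← P.comp_apply, hPidem]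
  have := real_inner_le_norm u (P u)
  nlinarith [norm_nonneg (P u), norm_nonneg u]

theorem inner_sub_apply_self_le {Ap Am H : E →L[ℝ] E} {β : ℝ} (hAm : ∀ u, 0 ≤ ⟪Am u, u⟫)
    (hHerr : ‖Ap - H‖ ≤ β) (s : E) : ⟪(Ap - Am) s, s⟫ ≤ ⟪H s, s⟫ + β * ‖s‖ ^ 2 := by
  have hAH : ⟪(Ap - H) s, s⟫ ≤ β * ‖s‖ ^ 2 :=
    calc ⟪(Ap - H) s, s⟫ ≤ ‖(Ap - H) s‖ * ‖s‖ := real_inner_le_norm _ _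
      _ ≤ ‖Ap - H‖ * ‖s‖ * ‖s‖ := by gcongr; exact (Ap - H).le_opNorm s
      _ ≤ β * ‖s‖ ^ 2 := by rw [mul_assoc, ← sq]; gcongr
  simp only [sub_apply, inner_sub_left] at hAH ⊢
  linarith [hAm s]

variable {L η : ℝ} {s : E} {H M : E →L[ℝ] E}

theorem inner_add_half_inner_add_cube_le_of_regularized_step {g : E} {β : ℝ}
    (hH : 0 ≤ ⟪H s, s⟫) (hM : ⟪M s, s⟫ ≤ ⟪H s, s⟫ + β * ‖s‖ ^ 2) (hηβ : β ≤ η)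
    (hstep : g + H s + (L / 2 * ‖s‖ + η) • s = 0) :
    ⟪g, s⟫ + 1 / 2 * ⟪M s, s⟫ + L / 6 * ‖s‖ ^ 3 ≤ -(L / 3 * ‖s‖ ^ 3 + η / 2 * ‖s‖ ^ 2) := by
  have hg : ⟪g, s⟫ = -⟪H s, s⟫ - (L / 2 * ‖s‖ + η) * ‖s‖ ^ 2 := by
    rw [eq_sub_of_add_eq (eq_neg_of_add_eq_zero_left hstep)]
    simp only [inner_sub_left, inner_neg_left, real_inner_smul_left, real_inner_self_eq_norm_sq]
    ring
  nlinarith [mul_le_mul_of_nonneg_right hηβ (sq_nonneg ‖s‖)]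

theorem norm_le_of_projected_regularized_step {g₀ g₁ : E} {P : E →L[ℝ] E} (hL : 0 ≤ L)
    (hη : 0 ≤ η) (hrem : ‖g₁ - g₀ - M (P s)‖ ≤ L / 2 * ‖P s‖ ^ 2) (hPs : ‖P s‖ ≤ ‖s‖)
    (hHP : H.comp P = H) (hHPerr : ‖(H - M).comp P‖ ≤ η)
    (hstep : g₀ + H s + (L / 2 * ‖s‖ + η) • s = 0) :
    ‖g₁‖ ≤ L * ‖s‖ ^ 2 + 2 * η * ‖s‖ := by
  have hsplit : g₁ = (g₁ - g₀ - M (P s)) - ((H - M).comp P) s - (L / 2 * ‖s‖ + η) • s := by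
    have hHPs : H (P s) = H s := by rw [← H.comp_apply, hHP]
    rw [ContinuousLinearMap.comp_apply, sub_apply, hHPs,
      eq_sub_of_add_eq (eq_neg_of_add_eq_zero_left hstep)]
    abel
  have hrem' : ‖g₁ - g₀ - M (P s)‖ ≤ L / 2 * ‖s‖ ^ 2 := by
    refine hrem.trans ?_
    gcongr
  have hmid : ‖((H - M).comp P) s‖ ≤ η * ‖s‖ :=
    (((H - M).comp P).le_opNorm s).trans (by gcongr)
  rw [hsplit]
  refine (norm_sub_le _ _).trans ?_
  refine (add_le_add_left (norm_sub_le _ _) _).trans ?_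
  rw [norm_smul, Real.norm_of_nonneg (by positivity)]
  nlinarith [norm_nonneg s]

end InnerProduct

theorem min_rpow_div_sq_div_le {g t L η D : ℝ} (hL : 0 < L) (hη : 0 < η) (ht : 0 ≤ t)
    (hg0 : 0 ≤ g) (hg : g ≤ L * t ^ 2 + 2 * η * t) (hD : L / 3 * t ^ 3 + η / 2 * t ^ 2 ≤ D) :
    min (g ^ ((3 : ℝ) / 2) / (6 * √(2 * L))) (g ^ 2 / (32 * η)) ≤ D := by
  rcases le_total g (2 * L * t ^ 2) with hcube | hquad
  · refine (min_le_left _ _).trans ?_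
    have hsqrt : √g ≤ √(2 * L) * t := by
      rw [← Real.sqrt_sq ht, ← Real.sqrt_mul (by positivity)]
      exact Real.sqrt_le_sqrt (by linarith)
    have hpow : g ^ ((3 : ℝ) / 2) = g * √g := by
      rw [Real.sqrt_eq_rpow, show (3 : ℝ) / 2 = 1 + 1 / 2 by norm_num,
        Real.rpow_add' hg0 (by norm_num), Real.rpow_one]
    rw [hpow, div_le_iff₀ (by positivity)]
    calc g * √g ≤ 2 * L * t ^ 2 * (√(2 * L) * t) :=
          mul_le_mul hcube hsqrt (Real.sqrt_nonneg _) (by positivity)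
      _ = L / 3 * t ^ 3 * (6 * √(2 * L)) := by ring
      _ ≤ D * (6 * √(2 * L)) := by gcongr; nlinarith [sq_nonneg t]
  · refine (min_le_right _ _).trans ?_
    have hlin : g ≤ 4 * η * t := by nlinarith
    have hDη : η / 2 * t ^ 2 ≤ D := by nlinarith [pow_nonneg ht 3]
    rw [div_le_iff₀ (by positivity)]
    nlinarith [pow_le_pow_left₀ hg0 hlin 2]

theorem one_step_progress_cut_negative_spectrum_general {n : ℕ}
    (f : EuclideanSpace ℝ (Fin n) → ℝ) (hf : ContDiff ℝ 2 f)
    (L : ℝ) (hL : 0 < L)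
    (hLip : ∀ x y, ‖hess f x - hess f y‖ ≤ L * ‖x - y‖)
    (x xp : EuclideanSpace ℝ (Fin n))
    (Ap Am H P : EuclideanSpace ℝ (Fin n) →L[ℝ] EuclideanSpace ℝ (Fin n))
    (hAm : IsSymmPSD Am)
    (hdecomp : hess f x = Ap - Am)
    (hH : IsSymmPSD H)
    (β : ℝ) (hHerr : ‖Ap - H‖ ≤ β)
    (hPsym : ∀ u v, ⟪P u, v⟫ = ⟪u, P v⟫) (hPidem : P.comp P = P)
    (hHP : H.comp P = H)
    (η : ℝ) (hηβ : β ≤ η) (hηpos : 0 < η)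
    (hHPerr : ‖(H - hess f x).comp P‖ ≤ η)
    (α : ℝ) (hα : α = L / 2 * ‖xp - x‖ + η)
    (hstep : gradient f x + H (xp - x) + α • (xp - x) = 0)
    (yp : EuclideanSpace ℝ (Fin n)) (hyp : yp = x + P (xp - x)) :
    min (‖gradient f yp‖ ^ ((3 : ℝ) / 2) / (6 * Real.sqrt (2 * L)))
        (‖gradient f yp‖ ^ 2 / (32 * η)) ≤ f x - f xp := by
  have hgrad y : HasGradientAt f (gradient f y) y :=
    (hf.differentiable (by norm_num) y).hasGradientAt
  have hhess y : HasFDerivAt (gradient f) (hess f y) y :=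
    (hf.differentiable_gradient le_rfl y).hasFDerivAt
  have hLipx y : ‖hess f y - hess f x‖ ≤ L * ‖y - x‖ := hLip y x
  subst hα hyp
  set s := xp - x
  have hdecrease : L / 3 * ‖s‖ ^ 3 + η / 2 * ‖s‖ ^ 2 ≤ f x - f xp := by
    have htaylor := (abs_le.mp (abs_sub_sub_inner_sub_inner_le_of_lipschitz_hessian
      hgrad hhess hLipx s)).2
    have hmodel := inner_add_half_inner_add_cube_le_of_regularized_step (hH.2 s)
      (hdecomp ▸ inner_sub_apply_self_le hAm.2 hHerr s) hηβ hstep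
    rw [show xp = x + s by simp [s]]
    linarith
  have hgradient : ‖gradient f (x + P s)‖ ≤ L * ‖s‖ ^ 2 + 2 * η * ‖s‖ :=
    norm_le_of_projected_regularized_step hL.le hηpos.le
      (norm_sub_sub_apply_le_of_lipschitz_fderiv hhess hLipx (P s))
      (norm_apply_le_of_symm_of_idempotent hPsym hPidem s) hHP hHPerr hstep
  exact min_rpow_div_sq_div_le hL hηpos (norm_nonneg s) (norm_nonneg _) hgradient hdecrease

/-- One-step progress independent of the negative curvature:
`f(x) − f(x⁺) ≥ min{ ‖∇f(y⁺)‖^{3/2}/(6√(2L)), ‖∇f(y⁺)‖²/(32η) }`. -/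
theorem one_step_progress_cut_negative_spectrum {n : ℕ}
    (f : EuclideanSpace ℝ (Fin n) → ℝ) (hf : ContDiff ℝ 2 f)
    (L : ℝ) (hL : 0 < L)
    (hLip : ∀ x y, ‖hess f x - hess f y‖ ≤ L * ‖x - y‖)
    (x xp : EuclideanSpace ℝ (Fin n))
    (Ap Am H P : EuclideanSpace ℝ (Fin n) →L[ℝ] EuclideanSpace ℝ (Fin n))
    (hAp : IsSymmPSD Ap) (hAm : IsSymmPSD Am)
    (hdecomp : hess f x = Ap - Am)
    (hH : IsSymmPSD H)
    (β : ℝ) (hβ : 0 ≤ β) (hHerr : ‖Ap - H‖ ≤ β)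
    (hPsym : ∀ u v, ⟪P u, v⟫ = ⟪u, P v⟫) (hPidem : P.comp P = P)
    (hHP : H.comp P = H)
    (η : ℝ) (hηβ : β ≤ η) (hηpos : 0 < η)
    (hHPerr : ‖(H - hess f x).comp P‖ ≤ η)
    (α : ℝ) (hα : α = L / 2 * ‖xp - x‖ + η)
    (hstep : gradient f x + H (xp - x) + α • (xp - x) = 0)
    (yp : EuclideanSpace ℝ (Fin n)) (hyp : yp = x + P (xp - x)) :
    min (‖gradient f yp‖ ^ ((3 : ℝ) / 2) / (6 * Real.sqrt (2 * L)))
        (‖gradient f yp‖ ^ 2 / (32 * η)) ≤ f x - f xp :=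
  one_step_progress_cut_negative_spectrum_general f hf L hL hLip x xp Ap Am H P hAm hdecomp hH β
    hHerr hPsym hPidem hHP η hηβ hηpos hHPerr α hα hstep yp hyp
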